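/- arXiv:1201.3476 — 2 statements merged into one kernel-verified Lean document; each statement's English description precedes it below -/
import Mathlib

section
/- For every composition λ ∈ Λ(n,r) with λ_1 ≥ 1, one has Σ_{j=1}^{λ_1} u_{λ,1}·T_1·T_2⋯T_{j−1} = Σ_{s=1}^{λ_1} q^{2λ_1−s−1}·u_{λ,s} (the summand for j = 1 being u_{λ,1} itself). -/
/-!
Statement 2: For `λ ∈ Λ(n,r)` with `λ_1 ≥ 1`,
`∑_{j=1}^{λ_1} u_{λ,1}·T_1⋯T_{j−1} = ∑_{s=1}^{λ_1} q^{2λ_1−s−1}·u_{λ,s}`.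

We model the tensor space `Ω_n^{⊗r}` inside the free ℂ-module on tuples `ℕ → ℕ`
(positions are 0-based; positions `≥ r` are never touched by the operators involved).
-/

open Finsupp

/-- The (right) action of the Hecke generator `T_{k+1}` (1-based) on the tensor space,
acting on the (0-based) positions `k` and `k+1`. -/
noncomputable def TOp (q : ℂ) (k : ℕ) :
    ((ℕ → ℕ) →₀ ℂ) →ₗ[ℂ] ((ℕ → ℕ) →₀ ℂ) :=
  Finsupp.lift ((ℕ → ℕ) →₀ ℂ) ℂ (ℕ → ℕ) fun f =>
    if f k = f (k + 1) then q ^ 2 • Finsupp.single f 1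
    else if f k < f (k + 1) then q • Finsupp.single (f ∘ Equiv.swap k (k + 1)) 1
    else q • Finsupp.single (f ∘ Equiv.swap k (k + 1)) 1 + (q ^ 2 - 1) • Finsupp.single f 1

/-- The tuple `i_λ` (block `i` has length `λ_i`; `lam` is 1-based). -/
def iLam (n : ℕ) (lam : ℕ → ℕ) : ℕ → ℕ := fun p =>
  1 + ((Finset.Icc 1 n).filter (fun i => (∑ j ∈ Finset.Icc 1 i, lam j) ≤ p)).card

/-- The basis vector `u_{λ,j}`: the tuple `i_λ` with the entry at (1-based) position `j`
replaced by `n`. -/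
noncomputable def uLam (n : ℕ) (lam : ℕ → ℕ) (j : ℕ) : (ℕ → ℕ) →₀ ℂ :=
  Finsupp.single (fun p => if p = j - 1 then n else iLam n lam p) 1

lemma iLam_eq_one (n : ℕ) (lam : ℕ → ℕ) (p : ℕ) (hp : p < lam 1) :
    iLam n lam p = 1 := by
  unfold iLam
  have : ((Finset.Icc 1 n).filter (fun i => (∑ j ∈ Finset.Icc 1 i, lam j) ≤ p)) = ∅ := by
    rw [Finset.filter_eq_empty_iff]
    intro i hi
    simp only [not_le]
    calc p < lam 1 := hp
    _ ≤ ∑ j ∈ Finset.Icc 1 i, lam j :=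
      Finset.single_le_sum (fun _ _ => Nat.zero_le _)
        (Finset.mem_Icc.mpr ⟨le_refl 1, (Finset.mem_Icc.mp hi).1⟩)
  rw [this]; rfl

lemma TOp_single (q : ℂ) (k : ℕ) (f : ℕ → ℕ) :
    TOp q k (Finsupp.single f 1) =
      if f k = f (k+1) then q ^ 2 • Finsupp.single f 1
      else if f k < f (k+1) then q • Finsupp.single (f ∘ Equiv.swap k (k+1)) 1
      else q • Finsupp.single (f ∘ Equiv.swap k (k+1)) 1 + (q^2-1) • Finsupp.single f 1 := by
  unfold TOp
  rw [Finsupp.lift_apply, Finsupp.sum_single_index (by simp), one_smul]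

lemma TOp_uLam_eq (q : ℂ) (n : ℕ) (lam : ℕ → ℕ) (s k : ℕ)
    (hs : 1 ≤ s) (hsk : s ≤ k) (hk : k + 1 < lam 1) :
    TOp q k (uLam n lam s) = q ^ 2 • uLam n lam s := by
  unfold uLam
  rw [TOp_single]
  have h1 : k ≠ s - 1 := by omega
  have h2 : k + 1 ≠ s - 1 := by omega
  rw [if_pos]
  simp only [h1, h2, if_false]
  rw [iLam_eq_one n lam k (by omega), iLam_eq_one n lam (k+1) hk]

lemma TOp_uLam_move (q : ℂ) (n : ℕ) (lam : ℕ → ℕ) (s : ℕ) (hn : 2 ≤ n)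
    (hs : 1 ≤ s) (hsl : s < lam 1) :
    TOp q (s-1) (uLam n lam s) = q • uLam n lam (s+1) + (q^2-1) • uLam n lam s := by
  unfold uLam
  rw [TOp_single]
  have hks : s - 1 + 1 = s := by omega
  have hfk : (if s - 1 = s - 1 then n else iLam n lam (s-1)) = n := if_pos rfl
  have hfk1 : (if s - 1 + 1 = s - 1 then n else iLam n lam (s-1+1)) = 1 := by
    rw [if_neg (by omega), iLam_eq_one n lam _ (by omega)]
  rw [hfk, hfk1, if_neg (by omega), if_neg (by omega)]
  have hfun : ((fun p => if p = s - 1 then n else iLam n lam p) ∘ ⇑(Equiv.swap (s-1) (s-1+1)))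
      = fun p => if p = s + 1 - 1 then n else iLam n lam p := by
    funext p
    simp only [Function.comp, Equiv.swap_apply_def, Nat.add_sub_cancel]
    rcases eq_or_ne p (s-1) with h1 | h1
    · subst h1
      simp only [eq_self_iff_true, if_true, hks]
      rw [if_neg (by omega), if_neg (by omega), iLam_eq_one n lam s (by omega),
          iLam_eq_one n lam (s-1) (by omega)]
    · rcases eq_or_ne p (s-1+1) with h2 | h2
      · subst h2
        simp only [if_neg h1, eq_self_iff_true, if_true]
        rw [if_pos (by omega)]
      · simp only [if_neg h1, if_neg h2]
        rw [if_neg (by omega)]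
  rw [hfun]

theorem stmt2 (q : ℂ) (hq : q ≠ 0) (n r : ℕ) (hn : 2 ≤ n) (hr : 1 ≤ r)
    (lam : ℕ → ℕ) (hsum : (∑ i ∈ Finset.Icc 1 n, lam i) = r) (hl : 1 ≤ lam 1) :
    (∑ j ∈ Finset.Icc 1 (lam 1),
        (List.range (j - 1)).foldl (fun v i => TOp q i v) (uLam n lam 1))
      = ∑ s ∈ Finset.Icc 1 (lam 1), q ^ (2 * lam 1 - s - 1) • uLam n lam s := by
  have key : ∀ j, 1 ≤ j → j ≤ lam 1 →
      (List.range (j-1)).foldl (fun v i => TOp q i v) (uLam n lam 1)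
        = q ^ (j-1) • uLam n lam j
          + (q^2 - 1) • ∑ s ∈ Finset.Icc 1 (j-1), q ^ (2*j - s - 3) • uLam n lam s := by
    intro j hj1
    induction j, hj1 using Nat.le_induction with
    | base =>
      intro _
      simp
    | succ j hj ih =>
      intro hjL
      obtain ⟨m, rfl⟩ : ∃ m, j = m + 1 := ⟨j - 1, by omega⟩
      have hvj := ih (by omega)
      simp only [Nat.add_sub_cancel] at hvj ⊢
      rw [List.range_succ, List.foldl_append, hvj]
      simp only [List.foldl_cons, List.foldl_nil]
      rw [map_add, map_smul, map_smul, map_sum]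
      have hmove := TOp_uLam_move q n lam (m+1) hn (by omega) (by omega)
      simp only [Nat.add_sub_cancel] at hmove
      rw [hmove]
      have he : ∀ s ∈ Finset.Icc 1 m,
          TOp q m (q ^ (2*(m+1) - s - 3) • uLam n lam s)
            = q ^ (2*(m+1+1) - s - 3) • uLam n lam s := by
        intro s hsm
        rw [Finset.mem_Icc] at hsm
        rw [map_smul, TOp_uLam_eq q n lam s m hsm.1 hsm.2 (by omega), smul_smul, ← pow_add,
            show 2*(m+1) - s - 3 + 2 = 2*(m+1+1) - s - 3 from by omega]
      rw [Finset.sum_congr rfl he,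
          Finset.sum_Icc_succ_top (by omega : (1:ℕ) ≤ m + 1),
          show 2*(m+1+1) - (m+1) - 3 = m from by omega, pow_succ]
      module
  have main : ∀ L, 1 ≤ L → L ≤ lam 1 →
      ∑ j ∈ Finset.Icc 1 L, (List.range (j-1)).foldl (fun v i => TOp q i v) (uLam n lam 1)
        = ∑ s ∈ Finset.Icc 1 L, q ^ (2*L - s - 1) • uLam n lam s := by
    intro L hL1
    induction L, hL1 using Nat.le_induction with
    | base =>
      intro _
      simp
    | succ L hL ih =>
      intro hLl
      rw [Finset.sum_Icc_succ_top (by omega : (1:ℕ) ≤ L + 1),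
          Finset.sum_Icc_succ_top (by omega : (1:ℕ) ≤ L + 1),
          ih (by omega), key (L+1) (by omega) hLl]
      simp only [Nat.add_sub_cancel]
      have h1 : ∀ s ∈ Finset.Icc 1 L,
          (q ^ (2*(L+1) - s - 3) • uLam n lam s : (ℕ → ℕ) →₀ ℂ)
            = q ^ (2*L - s - 1) • uLam n lam s := by
        intro s hsm
        rw [Finset.mem_Icc] at hsm
        congr 2
        omega
      have h2 : ∀ s ∈ Finset.Icc 1 L,
          (q ^ (2*(L+1) - s - 1) • uLam n lam s : (ℕ → ℕ) →₀ ℂ)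
            = q^2 • (q ^ (2*L - s - 1) • uLam n lam s) := by
        intro s hsm
        rw [Finset.mem_Icc] at hsm
        rw [smul_smul, ← pow_add]
        congr 2
        omega
      rw [Finset.sum_congr rfl h1, Finset.sum_congr rfl h2, ← Finset.smul_sum,
          show 2*(L+1) - (L+1) - 1 = L from by omega]
      module
  exact main (lam 1) hl (le_refl _)
end

section
/- For all integers n > r ≥ 1, the map ∂ : 𝒮_r → 𝒬(n)_r is a bijection. -/
/-!
Put `T_i(u) := Q_i(q^{i-1} u)`. Then `T_n = 1` and `T_i(u) = P_i(u) · T_{i+1}(q u)` for `i < n`,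
so the dominance of `∂ 𝐬` is the divisibility `T_{i+1}(q u) ∣ T_i(u)`, whose quotients are the
`P_i`. Conversely, the quotients of a dominant `𝐐` have constant term `1`, and over `ℂ` such a
polynomial factors uniquely as `∏ (1 - a u)` with all `a ≠ 0`: this gives injectivity and
surjectivity. Since `deg Q_i = Σ_{k ≥ i} #{segments of length k}`, the degrees of `∂ 𝐬` add up
to the total length of `𝐬`. For `𝐐 ∈ 𝒬(n)_r` the degrees decrease in `i`, so
`n · deg Q_n ≤ r < n` forces `Q_n = 1`, as it must be for an image of `∂`.
-/

open Polynomial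

/-- Substitution `u ↦ c·u` in a polynomial: `(scaleX c Q)(u) = Q(c·u)`. -/
noncomputable def scaleX (c : ℂ) (Q : Polynomial ℂ) : Polynomial ℂ :=
  Q.comp (C c * X)

/-- `P_i(u) = ∏_{(a,k) ∈ 𝐬, k = i} (1 − a·u)` (product with multiplicity). -/
noncomputable def segP (s : Multiset (ℂ × ℕ)) (i : ℕ) : Polynomial ℂ :=
  ((s.filter (fun p => p.2 = i)).map (fun p => 1 - C p.1 * X)).prod

/-- `Q_i(u) = P_i(q^{1−i}u)·P_{i+1}(q^{2−i}u)⋯P_{n−1}(q^{n−2i}u)` (and `Q_n = 1`). -/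
noncomputable def segQ (q : ℂ) (n : ℕ) (s : Multiset (ℂ × ℕ)) (i : ℕ) :
    Polynomial ℂ :=
  ∏ k ∈ Finset.Ico i n, scaleX (q ^ ((k : ℤ) - 2 * (i : ℤ) + 1)) (segP s k)

open Finset

lemma sum_Icc_sum_Ico {M : Type*} [AddCommMonoid M] (n : ℕ) (c : ℕ → M) :
    ∑ i ∈ Icc 1 n, ∑ k ∈ Ico i n, c k = ∑ k ∈ Ico 1 n, k • c k := by
  rw [sum_comm' (t' := Ico 1 n) (s' := fun k => Icc 1 k)]
  · exact sum_congr rfl fun k _ => by rw [sum_const, Nat.card_Icc, Nat.add_sub_cancel]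
  · intro i k
    simp only [mem_Icc, mem_Ico]
    omega

lemma scaleX_scaleX (c d : ℂ) (P : ℂ[X]) : scaleX c (scaleX d P) = scaleX (d * c) P := by
  simp only [scaleX, comp_assoc, mul_comp, C_comp, X_comp, ← mul_assoc, ← C_mul]

lemma scaleX_pow_succ (q : ℂ) (i : ℕ) (P : ℂ[X]) :
    scaleX (q ^ (i + 1)) P = scaleX q (scaleX (q ^ i) P) := by
  rw [scaleX_scaleX, pow_succ]

lemma scaleX_one_left (P : ℂ[X]) : scaleX 1 P = P := by
  simp [scaleX]

lemma scaleX_one_right (c : ℂ) : scaleX c 1 = 1 := one_comp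

lemma scaleX_prod {ι : Type*} (c : ℂ) (t : Finset ι) (f : ι → ℂ[X]) :
    scaleX c (∏ k ∈ t, f k) = ∏ k ∈ t, scaleX c (f k) :=
  prod_comp t f _

lemma coeff_zero_scaleX (c : ℂ) (P : ℂ[X]) : (scaleX c P).coeff 0 = P.coeff 0 := by
  simp [scaleX, coeff_zero_eq_eval_zero, eval_comp]

lemma natDegree_scaleX {c : ℂ} (hc : c ≠ 0) (P : ℂ[X]) :
    (scaleX c P).natDegree = P.natDegree := by
  simp [scaleX, natDegree_comp, natDegree_C_mul_X c hc]

lemma scaleX_injective {c : ℂ} (hc : c ≠ 0) : Function.Injective (scaleX c) :=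
  Function.LeftInverse.injective (g := scaleX c⁻¹) fun P => by
    rw [scaleX_scaleX, mul_inv_cancel₀ hc, scaleX_one_left]

lemma scaleX_ne_zero {c : ℂ} (hc : c ≠ 0) {P : ℂ[X]} (hP : P ≠ 0) : scaleX c P ≠ 0 := by
  simpa [scaleX] using (scaleX_injective hc).ne hP

section ProdOneSub

variable {K : Type*} [Field K]

noncomputable def prodOneSub (m : Multiset K) : K[X] := (m.map fun a => 1 - C a * X).prod

@[simp]
lemma prodOneSub_zero : prodOneSub (0 : Multiset K) = 1 := by simp [prodOneSub]

lemma coeff_zero_prodOneSub (m : Multiset K) : (prodOneSub m).coeff 0 = 1 := by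
  simp [prodOneSub, coeff_zero_eq_eval_zero, eval_multiset_prod]

lemma prodOneSub_ne_zero (m : Multiset K) : prodOneSub m ≠ 0 := fun h => by
  simpa [h] using coeff_zero_prodOneSub m

lemma prodOneSub_eq_C_mul_prod_X_sub_C {m : Multiset K} (hm : ∀ a ∈ m, a ≠ 0) :
    prodOneSub m = C (m.map (-·)).prod * ((m.map (·⁻¹)).map (X - C ·)).prod := by
  have key : ∀ a ∈ m, 1 - C a * X = C (-a) * (X - C a⁻¹) := fun a ha => by
    rw [mul_sub, ← C_mul, neg_mul, mul_inv_cancel₀ (hm a ha)]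
    simp only [C_neg, C_1]
    ring
  rw [prodOneSub, Multiset.map_congr rfl key, Multiset.prod_map_mul, map_multiset_prod,
    Multiset.map_map, Multiset.map_map]
  rfl

lemma prod_map_neg_ne_zero {m : Multiset K} (hm : ∀ a ∈ m, a ≠ 0) : (m.map (-·)).prod ≠ 0 :=
  Multiset.prod_ne_zero fun h => by
    obtain ⟨a, ha, h0⟩ := Multiset.mem_map.1 h
    exact hm a ha (neg_eq_zero.1 h0)

lemma roots_prodOneSub {m : Multiset K} (hm : ∀ a ∈ m, a ≠ 0) :
    (prodOneSub m).roots = m.map (·⁻¹) := by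
  rw [prodOneSub_eq_C_mul_prod_X_sub_C hm, roots_C_mul _ (prod_map_neg_ne_zero hm),
    roots_multiset_prod_X_sub_C]

lemma natDegree_prodOneSub {m : Multiset K} (hm : ∀ a ∈ m, a ≠ 0) :
    (prodOneSub m).natDegree = Multiset.card m := by
  rw [prodOneSub_eq_C_mul_prod_X_sub_C hm, natDegree_C_mul (prod_map_neg_ne_zero hm),
    natDegree_multiset_prod_X_sub_C_eq_card, Multiset.card_map]

lemma eq_of_prodOneSub_eq {m₁ m₂ : Multiset K} (h₁ : ∀ a ∈ m₁, a ≠ 0) (h₂ : ∀ a ∈ m₂, a ≠ 0)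
    (h : prodOneSub m₁ = prodOneSub m₂) : m₁ = m₂ := by
  have := congrArg roots h
  rw [roots_prodOneSub h₁, roots_prodOneSub h₂] at this
  exact Multiset.map_injective inv_injective this

lemma exists_prodOneSub_eq [IsAlgClosed K] {P : K[X]} (hP : P.coeff 0 = 1) :
    ∃ m : Multiset K, (∀ a ∈ m, a ≠ 0) ∧ prodOneSub m = P := by
  have hP0 : P ≠ 0 := fun h => by simp [h] at hP
  have hroots : ∀ z ∈ P.roots, z ≠ 0 := by
    rintro z hz rfl
    simpa [IsRoot, ← coeff_zero_eq_eval_zero, hP] using (mem_roots hP0).1 hz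
  set m := P.roots.map (·⁻¹) with hm_def
  have hm : ∀ a ∈ m, a ≠ 0 := by
    simp only [m, Multiset.forall_mem_map_iff, ne_eq, inv_eq_zero]
    exact hroots
  refine ⟨m, hm, ?_⟩
  -- both `P` and `prodOneSub m` are constant multiples of `∏ (X - z)` over the roots of `P`
  have hc : (m.map (-·)).prod ≠ 0 := prod_map_neg_ne_zero hm
  have hP' : P = C (P.leadingCoeff / (m.map (-·)).prod) * prodOneSub m := by
    rw [prodOneSub_eq_C_mul_prod_X_sub_C hm, ← mul_assoc, ← C_mul, div_mul_cancel₀ _ hc,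
      hm_def, Multiset.map_map]
    simpa using (C_leadingCoeff_mul_prod_multiset_X_sub_C IsAlgClosed.card_roots_eq_natDegree).symm
  have hlc : P.leadingCoeff / (m.map (-·)).prod = 1 := by
    simpa [hP, coeff_zero_prodOneSub] using (congrArg (coeff · 0) hP').symm
  rw [hP', hlc, C_1, one_mul]

end ProdOneSub

section TwistedProd

-- With `P = segP s`, this is `T_i(u) = Q_i(q^{i-1} u)`, see `scaleX_segQ`.
noncomputable def twistedProd (q : ℂ) (n : ℕ) (P : ℕ → ℂ[X]) (i : ℕ) : ℂ[X] :=
  ∏ k ∈ Ico i n, scaleX (q ^ (k - i)) (P k)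

variable {q : ℂ} {n : ℕ}

@[simp]
lemma twistedProd_self (P : ℕ → ℂ[X]) : twistedProd q n P n = 1 := by
  simp [twistedProd]

lemma twistedProd_eq_mul (P : ℕ → ℂ[X]) {i : ℕ} (hi : i < n) :
    twistedProd q n P i = P i * scaleX q (twistedProd q n P (i + 1)) := by
  rw [twistedProd, prod_eq_prod_Ico_succ_bot hi, twistedProd, scaleX_prod, Nat.sub_self,
    pow_zero, scaleX_one_left]
  refine congrArg _ (prod_congr rfl fun k hk => ?_)
  rw [scaleX_scaleX, ← pow_succ, Nat.sub_add_eq, Nat.sub_add_cancel]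
  have := (mem_Ico.1 hk).1
  omega

lemma twistedProd_ne_zero (hq : q ≠ 0) {P : ℕ → ℂ[X]} (hP : ∀ k, P k ≠ 0) (i : ℕ) :
    twistedProd q n P i ≠ 0 :=
  prod_ne_zero_iff.2 fun k _ => scaleX_ne_zero (pow_ne_zero _ hq) (hP k)

lemma natDegree_twistedProd (hq : q ≠ 0) {P : ℕ → ℂ[X]} (hP : ∀ k, P k ≠ 0) (i : ℕ) :
    (twistedProd q n P i).natDegree = ∑ k ∈ Ico i n, (P k).natDegree := by
  rw [twistedProd, natDegree_prod _ _ fun k _ => scaleX_ne_zero (pow_ne_zero _ hq) (hP k)]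
  exact sum_congr rfl fun k _ => natDegree_scaleX (pow_ne_zero _ hq) _

lemma eq_twistedProd_of_eq_mul {P T : ℕ → ℂ[X]} {j : ℕ} (hTn : T n = 1)
    (hT : ∀ k ∈ Ico j n, T k = P k * scaleX q (T (k + 1))) :
    ∀ i ∈ Icc j n, T i = twistedProd q n P i := by
  intro i hi
  obtain ⟨hji, hin⟩ := mem_Icc.1 hi
  induction hd : n - i generalizing i with
  | zero =>
    obtain rfl : i = n := by omega
    rw [hTn, twistedProd_self]
  | succ d ih =>
    rw [hT i (mem_Ico.2 ⟨hji, by omega⟩), twistedProd_eq_mul P (by omega),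
      ih (i + 1) (mem_Icc.2 ⟨by omega, by omega⟩) (by omega) (by omega) (by omega)]

lemma eq_of_twistedProd_eq (hq : q ≠ 0) {P P' : ℕ → ℂ[X]} (hP' : ∀ k, P' k ≠ 0) {j : ℕ}
    (h : ∀ i ∈ Icc j n, twistedProd q n P i = twistedProd q n P' i) :
    ∀ k ∈ Ico j n, P k = P' k := by
  intro k hk
  obtain ⟨hjk, hkn⟩ := mem_Ico.1 hk
  have hk' := h k (mem_Icc.2 ⟨hjk, hkn.le⟩)
  rw [twistedProd_eq_mul P hkn, twistedProd_eq_mul P' hkn,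
    h (k + 1) (mem_Icc.2 ⟨by omega, hkn⟩)] at hk'
  exact mul_right_cancel₀ (scaleX_ne_zero hq (twistedProd_ne_zero hq hP' _)) hk'

end TwistedProd

lemma segP_eq_prodOneSub (s : Multiset (ℂ × ℕ)) (k : ℕ) :
    segP s k = prodOneSub ((s.filter (·.2 = k)).map Prod.fst) := by
  simp [segP, prodOneSub, Multiset.map_map]

lemma segP_ne_zero (s : Multiset (ℂ × ℕ)) (k : ℕ) : segP s k ≠ 0 := by
  rw [segP_eq_prodOneSub]
  exact prodOneSub_ne_zero _

lemma coeff_zero_segP (s : Multiset (ℂ × ℕ)) (k : ℕ) : (segP s k).coeff 0 = 1 := by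
  rw [segP_eq_prodOneSub]
  exact coeff_zero_prodOneSub _

lemma natDegree_segP {s : Multiset (ℂ × ℕ)} (hs : ∀ p ∈ s, p.1 ≠ 0) (k : ℕ) :
    (segP s k).natDegree = (s.map Prod.snd).count k := by
  rw [segP_eq_prodOneSub, natDegree_prodOneSub, Multiset.card_map, Multiset.count_map]
  · simp_rw [eq_comm]
  · simpa using fun a ha => hs (a, k) ha

lemma segP_eq_one {s : Multiset (ℂ × ℕ)} {k : ℕ} (h : ∀ p ∈ s, p.2 ≠ k) : segP s k = 1 := by
  rw [segP_eq_prodOneSub, Multiset.filter_eq_nil.2 h, Multiset.map_zero, prodOneSub_zero]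

lemma eq_of_segP_eq {s₁ s₂ : Multiset (ℂ × ℕ)} (h₁ : ∀ p ∈ s₁, p.1 ≠ 0)
    (h₂ : ∀ p ∈ s₂, p.1 ≠ 0) (h : ∀ k, segP s₁ k = segP s₂ k) : s₁ = s₂ := by
  have hfiber (s : Multiset (ℂ × ℕ)) (k : ℕ) :
      ((s.filter (·.2 = k)).map Prod.fst).map (·, k) = s.filter (·.2 = k) := by
    rw [Multiset.map_map]
    refine (Multiset.map_congr rfl fun p hp => ?_).trans (Multiset.map_id _)
    exact Prod.ext rfl (Multiset.of_mem_filter hp).symm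
  have hfilter (k : ℕ) : s₁.filter (·.2 = k) = s₂.filter (·.2 = k) := by
    rw [← hfiber s₁, ← hfiber s₂]
    refine congrArg _ (eq_of_prodOneSub_eq ?_ ?_ ?_)
    · simpa using fun a ha => h₁ (a, k) ha
    · simpa using fun a ha => h₂ (a, k) ha
    · rw [← segP_eq_prodOneSub, ← segP_eq_prodOneSub, h]
  ext x
  rw [← Multiset.count_filter_of_pos (p := (·.2 = x.2)) rfl, hfilter]
  exact Multiset.count_filter_of_pos rfl

lemma segP_add (s t : Multiset (ℂ × ℕ)) (k : ℕ) : segP (s + t) k = segP s k * segP t k := by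
  simp only [segP, Multiset.filter_add, Multiset.map_add, Multiset.prod_add]

lemma segP_sum {ι : Type*} (t : Finset ι) (f : ι → Multiset (ℂ × ℕ)) (k : ℕ) :
    segP (∑ j ∈ t, f j) k = ∏ j ∈ t, segP (f j) k := by
  classical
  induction t using Finset.induction_on with
  | empty => simp [segP]
  | insert j t hj ih => rw [sum_insert hj, prod_insert hj, segP_add, ih]

lemma segP_map_prodMk (m : Multiset ℂ) (j k : ℕ) :
    segP (m.map (·, j)) k = if j = k then prodOneSub m else 1 := by
  split_ifs with hjk
  · subst hjk
    simp [segP_eq_prodOneSub, Multiset.filter_map, Multiset.map_map]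
  · exact segP_eq_one (by simpa using fun _ _ => hjk)

lemma mem_Ico_of_sum_lt {s : Multiset (ℂ × ℕ)} {n : ℕ} (hs : ∀ p ∈ s, p.1 ≠ 0 ∧ 1 ≤ p.2)
    (hsum : (s.map Prod.snd).sum < n) : ∀ p ∈ s, p.1 ≠ 0 ∧ p.2 ∈ Ico 1 n := fun p hp =>
  ⟨(hs p hp).1, mem_Ico.2
    ⟨(hs p hp).2, (Multiset.le_sum_of_mem (Multiset.mem_map_of_mem _ hp)).trans_lt hsum⟩⟩

section Segments

def IsDominant (q : ℂ) (n : ℕ) (Q : ℕ → ℂ[X]) : Prop :=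
  ∀ i, 1 ≤ i → i ≤ n - 1 → scaleX (q ^ (i + 1)) (Q (i + 1)) ∣ scaleX (q ^ (i - 1)) (Q i)

variable {q : ℂ} {n : ℕ}

lemma scaleX_segQ (hq : q ≠ 0) (s : Multiset (ℂ × ℕ)) {i : ℕ} (hi : 1 ≤ i) :
    scaleX (q ^ (i - 1)) (segQ q n s i) = twistedProd q n (segP s) i := by
  rw [segQ, scaleX_prod]
  refine prod_congr rfl fun k hk => ?_
  rw [scaleX_scaleX, ← zpow_natCast, ← zpow_natCast, ← zpow_add₀ hq]
  congr 2
  push_cast [Nat.cast_sub hi, Nat.cast_sub (mem_Ico.1 hk).1]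
  ring

lemma segQ_eq_iff (hq : q ≠ 0) (s : Multiset (ℂ × ℕ)) {i : ℕ} (hi : 1 ≤ i) (Q : ℂ[X]) :
    segQ q n s i = Q ↔ twistedProd q n (segP s) i = scaleX (q ^ (i - 1)) Q := by
  rw [← scaleX_segQ hq s hi]
  exact (scaleX_injective (pow_ne_zero _ hq)).eq_iff.symm

lemma coeff_zero_segQ (s : Multiset (ℂ × ℕ)) (i : ℕ) :
    (segQ q n s i).coeff 0 = 1 := by
  rw [segQ, coeff_zero_eq_eval_zero, eval_prod]
  exact prod_eq_one fun k _ => by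
    rw [← coeff_zero_eq_eval_zero, coeff_zero_scaleX, coeff_zero_segP]

lemma natDegree_segQ (hq : q ≠ 0) {s : Multiset (ℂ × ℕ)} (hs : ∀ p ∈ s, p.1 ≠ 0) {i : ℕ}
    (hi : 1 ≤ i) : (segQ q n s i).natDegree = ∑ k ∈ Ico i n, (s.map Prod.snd).count k := by
  rw [← natDegree_scaleX (pow_ne_zero (i - 1) hq), scaleX_segQ hq s hi,
    natDegree_twistedProd hq (segP_ne_zero s)]
  exact sum_congr rfl fun k _ => natDegree_segP hs k

lemma sum_natDegree_segQ (hq : q ≠ 0) {s : Multiset (ℂ × ℕ)}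
    (hs : ∀ p ∈ s, p.1 ≠ 0 ∧ p.2 ∈ Ico 1 n) :
    ∑ i ∈ Icc 1 n, (segQ q n s i).natDegree = (s.map Prod.snd).sum := by
  rw [sum_congr rfl fun i hi => natDegree_segQ hq (fun p hp => (hs p hp).1) (mem_Icc.1 hi).1,
    sum_Icc_sum_Ico, sum_multiset_count_of_subset _ (Ico 1 n)]
  · exact sum_congr rfl fun k _ => by rw [smul_eq_mul, smul_eq_mul, mul_comm]
  · intro k hk
    obtain ⟨p, hp, rfl⟩ := Multiset.mem_map.1 (Multiset.mem_toFinset.1 hk)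
    exact (hs p hp).2

lemma isDominant_segQ (hq : q ≠ 0) (s : Multiset (ℂ × ℕ)) : IsDominant q n (segQ q n s) := by
  intro i hi hin
  have hsucc := scaleX_segQ (n := n) hq s (Nat.le_add_left 1 i)
  rw [Nat.add_sub_cancel] at hsucc
  rw [scaleX_pow_succ, hsucc, scaleX_segQ hq s hi, twistedProd_eq_mul (i := i) _ (by omega)]
  exact dvd_mul_left _ _

lemma eq_of_segQ_eq (hq : q ≠ 0) {s₁ s₂ : Multiset (ℂ × ℕ)}
    (hs₁ : ∀ p ∈ s₁, p.1 ≠ 0 ∧ p.2 ∈ Ico 1 n) (hs₂ : ∀ p ∈ s₂, p.1 ≠ 0 ∧ p.2 ∈ Ico 1 n)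
    (h : ∀ i, 1 ≤ i → i ≤ n → segQ q n s₁ i = segQ q n s₂ i) : s₁ = s₂ := by
  have hP := eq_of_twistedProd_eq hq (segP_ne_zero s₂) fun i hi => by
    obtain ⟨hi1, hin⟩ := mem_Icc.1 hi
    rw [← scaleX_segQ hq s₁ hi1, ← scaleX_segQ hq s₂ hi1, h i hi1 hin]
  refine eq_of_segP_eq (fun p hp => (hs₁ p hp).1) (fun p hp => (hs₂ p hp).1) fun k => ?_
  by_cases hk : k ∈ Ico 1 n
  · exact hP k hk
  · rw [segP_eq_one fun p hp => ne_of_mem_of_not_mem (hs₁ p hp).2 hk,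
      segP_eq_one fun p hp => ne_of_mem_of_not_mem (hs₂ p hp).2 hk]

lemma exists_segP_eq {P : ℕ → ℂ[X]} (hP : ∀ k ∈ Ico 1 n, (P k).coeff 0 = 1) :
    ∃ s : Multiset (ℂ × ℕ), (∀ p ∈ s, p.1 ≠ 0 ∧ p.2 ∈ Ico 1 n) ∧
      ∀ k ∈ Ico 1 n, segP s k = P k := by
  have hm : ∀ k, ∃ m : Multiset ℂ, (∀ a ∈ m, a ≠ 0) ∧ (k ∈ Ico 1 n → prodOneSub m = P k) := by
    intro k
    by_cases hk : k ∈ Ico 1 n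
    · obtain ⟨m, hm0, hmP⟩ := exists_prodOneSub_eq (hP k hk)
      exact ⟨m, hm0, fun _ => hmP⟩
    · exact ⟨0, by simp, fun h => absurd h hk⟩
  choose m hm0 hmP using hm
  refine ⟨∑ k ∈ Ico 1 n, (m k).map (·, k), fun p hp => ?_, fun k hk => ?_⟩
  · obtain ⟨k, hk, hpk⟩ := Multiset.mem_sum.1 hp
    obtain ⟨a, ha, rfl⟩ := Multiset.mem_map.1 hpk
    exact ⟨hm0 k a ha, hk⟩
  · rw [segP_sum, prod_congr rfl fun j _ => segP_map_prodMk (m j) j k, prod_ite_eq', if_pos hk,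
      hmP k hk]

lemma exists_segQ_eq (hq : q ≠ 0) {Q : ℕ → ℂ[X]}
    (hQ0 : ∀ i, 1 ≤ i → i ≤ n → (Q i).coeff 0 = 1) (hQn : Q n = 1) (hdom : IsDominant q n Q) :
    ∃ s : Multiset (ℂ × ℕ), (∀ p ∈ s, p.1 ≠ 0 ∧ p.2 ∈ Ico 1 n) ∧
      ∀ i, 1 ≤ i → i ≤ n → segQ q n s i = Q i := by
  set R : ℕ → ℂ[X] := fun i => scaleX (q ^ (i - 1)) (Q i)
  have hfac : ∀ k, ∃ P : ℂ[X], k ∈ Ico 1 n → R k = scaleX q (R (k + 1)) * P := by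
    intro k
    by_cases hk : k ∈ Ico 1 n
    · obtain ⟨hk1, hkn⟩ := mem_Ico.1 hk
      obtain ⟨P, hP⟩ := hdom k hk1 (by omega)
      refine ⟨P, fun _ => ?_⟩
      simpa [R, scaleX_pow_succ] using hP
    · exact ⟨1, fun h => absurd h hk⟩
  choose P hP using hfac
  obtain ⟨s, hs, hsP⟩ := exists_segP_eq (n := n) (P := P) fun k hk => by
    obtain ⟨hk1, hkn⟩ := mem_Ico.1 hk
    have h := congrArg (coeff · 0) (hP k hk)
    simp only [R, mul_coeff_zero, coeff_zero_scaleX, hQ0 k hk1 hkn.le,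
      hQ0 (k + 1) (by omega) hkn, one_mul] at h
    exact h.symm
  refine ⟨s, hs, fun i hi hin => (segQ_eq_iff hq s hi _).2 ?_⟩
  refine (eq_twistedProd_of_eq_mul (T := R) (P := segP s) ?_ (fun k hk => ?_) i
    (mem_Icc.2 ⟨hi, hin⟩)).symm
  · simp [R, hQn, scaleX_one_right]
  · rw [hP k hk, hsP k hk, mul_comm]

lemma natDegree_succ_le_of_isDominant (hq : q ≠ 0) {Q : ℕ → ℂ[X]}
    (hQ0 : ∀ i, 1 ≤ i → i ≤ n → (Q i).coeff 0 = 1) (hdom : IsDominant q n Q) {i : ℕ}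
    (hi : 1 ≤ i) (hin : i < n) : (Q (i + 1)).natDegree ≤ (Q i).natDegree := by
  have hQi : Q i ≠ 0 := fun h => by simpa [h] using hQ0 i hi hin.le
  simpa only [natDegree_scaleX (pow_ne_zero _ hq)] using
    natDegree_le_of_dvd (hdom i hi (by omega)) (scaleX_ne_zero (pow_ne_zero _ hq) hQi)

lemma eq_one_of_isDominant (hq : q ≠ 0) {Q : ℕ → ℂ[X]}
    (hQ0 : ∀ i, 1 ≤ i → i ≤ n → (Q i).coeff 0 = 1)
    (hdeg : ∑ i ∈ Icc 1 n, (Q i).natDegree < n) (hdom : IsDominant q n Q) : Q n = 1 := by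
  have hn : 1 ≤ n := Nat.one_le_iff_ne_zero.2 fun h => by simp [h] at hdeg
  have hanti : AntitoneOn (fun i => (Q i).natDegree) (Set.Icc 1 n) :=
    antitoneOn_of_add_one_le Set.ordConnected_Icc fun i _ hi hi' =>
      natDegree_succ_le_of_isDominant hq hQ0 hdom hi.1 hi'.2
  have hle : n * (Q n).natDegree ≤ ∑ i ∈ Icc 1 n, (Q i).natDegree := by
    simpa using card_nsmul_le_sum (Icc 1 n) _ _ fun i hi =>
      hanti (coe_Icc 1 n ▸ hi) (Set.right_mem_Icc.2 hn) (mem_Icc.1 hi).2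
  have h0 : (Q n).natDegree = 0 := by
    by_contra hd
    have := Nat.le_mul_of_pos_right n (Nat.pos_of_ne_zero hd)
    omega
  rw [eq_C_of_natDegree_eq_zero h0, hQ0 n hn le_rfl, C_1]

end Segments

theorem stmt13_general (q : ℂ) (hq : q ≠ 0)
    (n r : ℕ) (hnr : r < n) :
    -- ∂ maps 𝒮_r into 𝒬(n)_r
    (∀ s : Multiset (ℂ × ℕ), (∀ p ∈ s, p.1 ≠ 0 ∧ 1 ≤ p.2) →
      (s.map Prod.snd).sum = r →
      (∀ i, 1 ≤ i → i ≤ n → (segQ q n s i).coeff 0 = 1) ∧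
      (∑ i ∈ Finset.Icc 1 n, (segQ q n s i).natDegree) = r ∧
      (∀ i, 1 ≤ i → i ≤ n - 1 →
        scaleX (q ^ (i + 1)) (segQ q n s (i + 1)) ∣
          scaleX (q ^ (i - 1)) (segQ q n s i))) ∧
    -- ∂ is injective on 𝒮_r
    (∀ s₁ s₂ : Multiset (ℂ × ℕ),
      (∀ p ∈ s₁, p.1 ≠ 0 ∧ 1 ≤ p.2) → (s₁.map Prod.snd).sum = r →
      (∀ p ∈ s₂, p.1 ≠ 0 ∧ 1 ≤ p.2) → (s₂.map Prod.snd).sum = r →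
      (∀ i, 1 ≤ i → i ≤ n → segQ q n s₁ i = segQ q n s₂ i) → s₁ = s₂) ∧
    -- ∂ is surjective onto 𝒬(n)_r
    (∀ Q : ℕ → Polynomial ℂ,
      (∀ i, 1 ≤ i → i ≤ n → (Q i).coeff 0 = 1) →
      (∑ i ∈ Finset.Icc 1 n, (Q i).natDegree) = r →
      (∀ i, 1 ≤ i → i ≤ n - 1 →
        scaleX (q ^ (i + 1)) (Q (i + 1)) ∣ scaleX (q ^ (i - 1)) (Q i)) →
      ∃ s : Multiset (ℂ × ℕ), (∀ p ∈ s, p.1 ≠ 0 ∧ 1 ≤ p.2) ∧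
        (s.map Prod.snd).sum = r ∧
        ∀ i, 1 ≤ i → i ≤ n → segQ q n s i = Q i) := by
  refine ⟨fun s hs hsum => ?_, fun s₁ s₂ hs₁ hsum₁ hs₂ hsum₂ hQ => ?_, fun Q hQ0 hdeg hdom => ?_⟩
  · have hs' := mem_Ico_of_sum_lt hs (hsum ▸ hnr)
    exact ⟨fun i _ _ => coeff_zero_segQ s i, (sum_natDegree_segQ hq hs').trans hsum,
      isDominant_segQ hq s⟩
  · exact eq_of_segQ_eq hq (mem_Ico_of_sum_lt hs₁ (hsum₁ ▸ hnr))
      (mem_Ico_of_sum_lt hs₂ (hsum₂ ▸ hnr)) hQ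
  · have hQn := eq_one_of_isDominant hq hQ0 (hdeg ▸ hnr) hdom
    obtain ⟨s, hs, hsQ⟩ := exists_segQ_eq hq hQ0 hQn hdom
    refine ⟨s, fun p hp => ⟨(hs p hp).1, (mem_Ico.1 (hs p hp).2).1⟩, ?_, hsQ⟩
    rw [← sum_natDegree_segQ hq hs, ← hdeg]
    exact sum_congr rfl fun i hi => by rw [hsQ i (mem_Icc.1 hi).1 (mem_Icc.1 hi).2]

theorem stmt13 (q : ℂ) (hq : q ≠ 0) (hru : ∀ m : ℕ, 1 ≤ m → q ^ m ≠ 1)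
    (n r : ℕ) (hr : 1 ≤ r) (hnr : r < n) :
    -- ∂ maps 𝒮_r into 𝒬(n)_r
    (∀ s : Multiset (ℂ × ℕ), (∀ p ∈ s, p.1 ≠ 0 ∧ 1 ≤ p.2) →
      (s.map Prod.snd).sum = r →
      (∀ i, 1 ≤ i → i ≤ n → (segQ q n s i).coeff 0 = 1) ∧
      (∑ i ∈ Finset.Icc 1 n, (segQ q n s i).natDegree) = r ∧
      (∀ i, 1 ≤ i → i ≤ n - 1 →
        scaleX (q ^ (i + 1)) (segQ q n s (i + 1)) ∣
          scaleX (q ^ (i - 1)) (segQ q n s i))) ∧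
    -- ∂ is injective on 𝒮_r
    (∀ s₁ s₂ : Multiset (ℂ × ℕ),
      (∀ p ∈ s₁, p.1 ≠ 0 ∧ 1 ≤ p.2) → (s₁.map Prod.snd).sum = r →
      (∀ p ∈ s₂, p.1 ≠ 0 ∧ 1 ≤ p.2) → (s₂.map Prod.snd).sum = r →
      (∀ i, 1 ≤ i → i ≤ n → segQ q n s₁ i = segQ q n s₂ i) → s₁ = s₂) ∧
    -- ∂ is surjective onto 𝒬(n)_r
    (∀ Q : ℕ → Polynomial ℂ,
      (∀ i, 1 ≤ i → i ≤ n → (Q i).coeff 0 = 1) →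
      (∑ i ∈ Finset.Icc 1 n, (Q i).natDegree) = r →
      (∀ i, 1 ≤ i → i ≤ n - 1 →
        scaleX (q ^ (i + 1)) (Q (i + 1)) ∣ scaleX (q ^ (i - 1)) (Q i)) →
      ∃ s : Multiset (ℂ × ℕ), (∀ p ∈ s, p.1 ≠ 0 ∧ 1 ≤ p.2) ∧
        (s.map Prod.snd).sum = r ∧
        ∀ i, 1 ≤ i → i ≤ n → segQ q n s i = Q i) :=
  stmt13_general q hq n r hnr
end
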